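/- Let α > 0, k > 0, and consider β ∈ (0, k/α). Define V(s, β) = s·(1 − s)·( 1/(1 − β·α·s/k) + (β·α·s/k) / (2·(1 − β·α·s/k)²) ) for s ∈ [0, 1]. Then for each such β, the function s ↦ V(s, β) attains its maximum on [0, 1] at a unique point s*(β), this maximizer lies in the open interval (1/2, 1), and the map β ↦ s*(β) is strictly increasing on (0, k/α). -/

import Mathlib

/-!
With `t = βα/k ∈ (0, 1)` the profit is `W t s = s(1 - s)(2 - ts) / (2(1 - ts)²)`, whose derivative
is `P t s / (2(1 - ts)³)` for the first-order cubic `P t s = 2 - 4s + 3ts² - t²s³`. The cubic is strictly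
decreasing in `s`, positive at `1/2` and negative at `1`, so `W t` increases up to the unique root
`s*(t) ∈ (1/2, 1)` of `P t` and decreases after it. Raising `t` raises `P t` at `s*(t)`, which
pushes the root to the right.
-/

open Set

/-- The principal's residual profit (up to the factor `α²`) when a total amount `s` of
equity is distributed according to the balanced neighborhood equity condition, with
`k = 𝟙ᵀG⁻¹𝟙` the sum of equity centralities of the active agents. -/
noncomputable def residualProfit (α k s β : ℝ) : ℝ :=
  s * (1 - s) * (1 / (1 - β * α * s / k)
    + (β * α * s / k) / (2 * (1 - β * α * s / k) ^ 2))

noncomputable def reducedProfit (t s : ℝ) : ℝ :=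
  s * (1 - s) * (2 - t * s) / (2 * (1 - t * s) ^ 2)

def focCubic (t s : ℝ) : ℝ :=
  2 - 4 * s + 3 * t * s ^ 2 - t ^ 2 * s ^ 3

/-- Both sides vanish when `β * α * s / k = 1`, through the junk value of division by zero. -/
lemma residualProfit_eq_reducedProfit (α k s β : ℝ) :
    residualProfit α k s β = reducedProfit (β * α / k) s := by
  have hts : β * α * s / k = β * α / k * s := by ring
  unfold residualProfit reducedProfit
  rw [hts]
  generalize β * α / k = t
  rcases eq_or_ne (1 - t * s) 0 with h | h
  · simp [h]
  · field_simp
    ring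

lemma focCubic_strictAnti (t : ℝ) : StrictAnti (focCubic t) := by
  intro s₁ s₂ h
  have key : focCubic t s₁ - focCubic t s₂ = (s₂ - s₁) *
      (1 + (1 - t * s₁) * (1 - t * s₂) + (1 - t * s₁) ^ 2 + (1 - t * s₂) ^ 2) := by
    unfold focCubic; ring
  have hpos : 0 < 1 + (1 - t * s₁) * (1 - t * s₂) + (1 - t * s₁) ^ 2 + (1 - t * s₂) ^ 2 := by
    nlinarith [sq_nonneg (1 - t * s₁ + (1 - t * s₂))]
  nlinarith [mul_pos (sub_pos.2 h) hpos]

lemma focCubic_lt_focCubic {t₁ t₂ s : ℝ} (h : t₁ < t₂) (hs : s ≠ 0) (hts : (t₁ + t₂) * s < 3) :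
    focCubic t₁ s < focCubic t₂ s := by
  have key : focCubic t₂ s - focCubic t₁ s = (t₂ - t₁) * s ^ 2 * (3 - (t₁ + t₂) * s) := by
    unfold focCubic; ring
  have := mul_pos (mul_pos (sub_pos.2 h) (by positivity : 0 < s ^ 2)) (sub_pos.2 hts)
  linarith

lemma exists_focCubic_eq_zero {t : ℝ} (ht : t ∈ Ioo 0 1) :
    ∃ s ∈ Ioo (1 / 2 : ℝ) 1, focCubic t s = 0 := by
  have hc : ContinuousOn (focCubic t) (Icc (1 / 2) 1) := by
    unfold focCubic; fun_prop
  have h₁ : focCubic t 1 < 0 := by unfold focCubic; nlinarith [ht.1, ht.2]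
  have h₂ : 0 < focCubic t (1 / 2) := by unfold focCubic; nlinarith [ht.1, ht.2]
  exact intermediate_value_Ioo' (by norm_num) hc ⟨h₁, h₂⟩

noncomputable def optimalEquity (t : ℝ) : ℝ :=
  Classical.epsilon fun s => s ∈ Ioo (1 / 2 : ℝ) 1 ∧ focCubic t s = 0

lemma optimalEquity_spec {t : ℝ} (ht : t ∈ Ioo 0 1) :
    optimalEquity t ∈ Ioo (1 / 2 : ℝ) 1 ∧ focCubic t (optimalEquity t) = 0 := by
  obtain ⟨s, hs, hroot⟩ := exists_focCubic_eq_zero ht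
  exact Classical.epsilon_spec (p := fun s => s ∈ Ioo (1 / 2 : ℝ) 1 ∧ focCubic t s = 0)
    ⟨s, hs, hroot⟩

lemma optimalEquity_strictMonoOn : StrictMonoOn optimalEquity (Ioo 0 1) := by
  intro t₁ ht₁ t₂ ht₂ h
  obtain ⟨hm₁, hroot₁⟩ := optimalEquity_spec ht₁
  obtain ⟨-, hroot₂⟩ := optimalEquity_spec ht₂
  have hlt : focCubic t₂ (optimalEquity t₂) < focCubic t₂ (optimalEquity t₁) := by
    rw [hroot₂, ← hroot₁]
    refine focCubic_lt_focCubic h (by linarith [hm₁.1]) ?_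
    nlinarith [ht₁.1, ht₁.2, ht₂.1, ht₂.2, hm₁.1, hm₁.2]
  exact (focCubic_strictAnti t₂).lt_iff_gt.mp hlt

lemma hasDerivAt_reducedProfit {t s : ℝ} (h : 1 - t * s ≠ 0) :
    HasDerivAt (reducedProfit t) (focCubic t s / (2 * (1 - t * s) ^ 3)) s := by
  have hx := hasDerivAt_id' s
  have hnum := (hx.fun_mul (hx.const_sub 1)).fun_mul ((hx.const_mul t).const_sub 2)
  have hden := ((hx.const_mul t).const_sub 1).fun_pow 2 |>.const_mul 2
  refine (hnum.fun_div hden (by positivity)).congr_deriv ?_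
  rw [div_eq_div_iff (by positivity) (by positivity)]
  unfold focCubic
  norm_num
  ring

lemma one_sub_mul_pos {t x : ℝ} (ht₀ : 0 ≤ t) (ht₁ : t < 1) (hx : x ≤ 1) : 0 < 1 - t * x := by
  rcases le_total 0 x with hx₀ | hx₀ <;> nlinarith

lemma continuousOn_reducedProfit {t : ℝ} (ht₀ : 0 ≤ t) (ht₁ : t < 1) :
    ContinuousOn (reducedProfit t) (Iic 1) := fun _ hx =>
  (hasDerivAt_reducedProfit (one_sub_mul_pos ht₀ ht₁ hx).ne').continuousAt.continuousWithinAt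

lemma reducedProfit_strictMonoOn {t m : ℝ} (ht₀ : 0 ≤ t) (ht₁ : t < 1) (hm : m ≤ 1)
    (hroot : focCubic t m = 0) : StrictMonoOn (reducedProfit t) (Iic m) := by
  refine strictMonoOn_of_deriv_pos (convex_Iic m)
    ((continuousOn_reducedProfit ht₀ ht₁).mono (Iic_subset_Iic.2 hm)) fun x hx => ?_
  rw [interior_Iic] at hx
  have hden := one_sub_mul_pos ht₀ ht₁ (hx.le.trans hm)
  have hnum : 0 < focCubic t x := hroot ▸ focCubic_strictAnti t hx
  rw [(hasDerivAt_reducedProfit hden.ne').deriv]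
  positivity

lemma reducedProfit_strictAntiOn {t m : ℝ} (ht₀ : 0 ≤ t) (ht₁ : t < 1)
    (hroot : focCubic t m = 0) : StrictAntiOn (reducedProfit t) (Icc m 1) := by
  refine strictAntiOn_of_deriv_neg (convex_Icc m 1)
    ((continuousOn_reducedProfit ht₀ ht₁).mono Icc_subset_Iic_self) fun x hx => ?_
  rw [interior_Icc] at hx
  have hden := one_sub_mul_pos ht₀ ht₁ hx.2.le
  have hnum : focCubic t x < 0 := hroot ▸ focCubic_strictAnti t hx.1
  rw [(hasDerivAt_reducedProfit hden.ne').deriv]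
  exact div_neg_of_neg_of_pos hnum (by positivity)

lemma lt_of_strictMonoOn_of_strictAntiOn {α β : Type*} [LinearOrder α] [Preorder β]
    {f : α → β} {a m b s : α} (hinc : StrictMonoOn f (Icc a m))
    (hdec : StrictAntiOn f (Icc m b)) (hs : s ∈ Icc a b) (hne : s ≠ m) : f s < f m := by
  rcases hne.lt_or_gt with h | h
  · exact hinc ⟨hs.1, h.le⟩ ⟨hs.1.trans h.le, le_rfl⟩ h
  · exact hdec ⟨le_rfl, h.le.trans hs.2⟩ ⟨h.le, hs.2⟩ h

lemma reducedProfit_lt_reducedProfit_optimalEquity {t s : ℝ} (ht : t ∈ Ioo 0 1) (hs : s ∈ Icc 0 1)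
    (hne : s ≠ optimalEquity t) : reducedProfit t s < reducedProfit t (optimalEquity t) := by
  obtain ⟨hm, hroot⟩ := optimalEquity_spec ht
  exact lt_of_strictMonoOn_of_strictAntiOn
    ((reducedProfit_strictMonoOn ht.1.le ht.2 hm.2.le hroot).mono Icc_subset_Iic_self)
    (reducedProfit_strictAntiOn ht.1.le ht.2 hroot) hs hne

/-- for each `β ∈ (0, k/α)`, the function `s ↦ V(s, β)` has a unique
maximizer on `[0, 1]`; this maximizer lies in `(1/2, 1)`, and it is strictly increasing
in `β`. -/
theorem statement_19 (α k : ℝ) (hα : 0 < α) (hk : 0 < k) :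
    ∃ sstar : ℝ → ℝ,
      (∀ β ∈ Set.Ioo (0 : ℝ) (k / α),
        sstar β ∈ Set.Ioo (1 / 2 : ℝ) 1 ∧
        (∀ s ∈ Set.Icc (0 : ℝ) 1, residualProfit α k s β ≤ residualProfit α k (sstar β) β) ∧
        (∀ s ∈ Set.Icc (0 : ℝ) 1,
          (∀ s' ∈ Set.Icc (0 : ℝ) 1, residualProfit α k s' β ≤ residualProfit α k s β) →
          s = sstar β)) ∧
      StrictMonoOn sstar (Set.Ioo (0 : ℝ) (k / α)) := by
  have hscale : StrictMono fun β : ℝ => β * α / k := fun _ _ h => by dsimp only; gcongr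
  have hmaps : MapsTo (fun β : ℝ => β * α / k) (Ioo 0 (k / α)) (Ioo 0 1) := fun β hβ =>
    ⟨by have := hβ.1; positivity, by
      rw [div_lt_one hk, ← lt_div_iff₀ hα]; exact hβ.2⟩
  refine ⟨fun β => optimalEquity (β * α / k), fun β hβ => ?_,
    optimalEquity_strictMonoOn.comp (hscale.strictMonoOn _) hmaps⟩
  have ht := hmaps hβ
  have hm := (optimalEquity_spec ht).1
  have hlt {s} := @reducedProfit_lt_reducedProfit_optimalEquity _ s ht
  simp only [residualProfit_eq_reducedProfit]
  refine ⟨hm, fun s hs => ?_, fun s hs hmax => ?_⟩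
  · rcases eq_or_ne s (optimalEquity (β * α / k)) with h | h
    · rw [h]
    · exact (hlt hs h).le
  · by_contra h
    exact (hmax _ ⟨by linarith [hm.1], hm.2.le⟩).not_gt (hlt hs h)
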